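/- arXiv:1311.6044 — 3 statements merged into one kernel-verified Lean document; each statement's English description precedes it below -/
import Mathlib

section
/- Let Ω ⊂ ℝ^N be open with 0 ∈ ∂Ω, and suppose there are η₀ > 0 and a C² function φ : {z' ∈ ℝ^{N−1} : |z'| < η₀} → ℝ with φ(0) = 0 and ∇φ(0) = 0 such that, for z = (z₁, z') with |z₁| < η₀ and |z'| < η₀, z ∈ Ω if and only if φ(z') < z₁ < η₀, and the points (φ(z'), z') lie on ∂Ω. Then there exist η > 0 and C > 0 such that d(z) ≥ (z₁ − φ(z'))(1 − C|z'|²) for all z = (z₁, z') ∈ Ω with |z₁| < η and |z'| < η, where d(z) = dist(z, ∂Ω). -/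
open MeasureTheory Filter Topology Set
open scoped Classical

noncomputable section

abbrev EucSp (N : ℕ) : Type := EuclideanSpace ℝ (Fin N)

/-- The second-difference kernel of the fractional Laplacian:
`δ(u,x,y)/|y|^{N+2α}` with `δ(u,x,y) = u(x+y) + u(x-y) - 2u(x)`. -/
def fracKernel (N : ℕ) (α : ℝ) (u : EucSp N → ℝ) (x y : EucSp N) : ℝ :=
  (u (x + y) + u (x - y) - 2 * u x) / ‖y‖ ^ ((N : ℝ) + 2 * α)

/-- `(-Δ)^α u` is well defined at `x` (the defining integral converges). -/
def FracLapDefinedAt (N : ℕ) (α : ℝ) (u : EucSp N → ℝ) (x : EucSp N) : Prop :=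
  Integrable (fracKernel N α u x)

/-- The fractional Laplacian `(-Δ)^α u (x) = -(1/2) ∫ δ(u,x,y)/|y|^{N+2α} dy`. -/
def fracLap (N : ℕ) (α : ℝ) (u : EucSp N → ℝ) (x : EucSp N) : ℝ :=
  -(1 / 2) * ∫ y, fracKernel N α u x y

/-- Membership in the weighted space `L¹_ω(ℝ^N)`, `ω(y) = (1+|y|^{N+2α})⁻¹`. -/
def MemL1w (N : ℕ) (α : ℝ) (u : EucSp N → ℝ) : Prop :=
  Integrable (fun y => u y / (1 + ‖y‖ ^ ((N : ℝ) + 2 * α)))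

/-- Distance to the boundary, `d(x) = dist(x, ∂Ω)`. -/
def dΩ {N : ℕ} (Ω : Set (EucSp N)) (x : EucSp N) : ℝ :=
  Metric.infDist x (frontier Ω)

/-- The filter of points `x ∈ Ω` with `x → ∂Ω`. -/
def bdryFilter {N : ℕ} (Ω : Set (EucSp N)) : Filter (EucSp N) :=
  nhdsSet (frontier Ω) ⊓ Filter.principal Ω

/-- `Ω` has `C²` boundary: near each boundary point, `Ω` is the sublevel set of a
`C²` function with nonvanishing gradient. -/
def HasC2Boundary {N : ℕ} (Ω : Set (EucSp N)) : Prop :=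
  ∀ x ∈ frontier Ω, ∃ (U : Set (EucSp N)) (φ : EucSp N → ℝ),
    IsOpen U ∧ x ∈ U ∧ ContDiffOn ℝ 2 φ U ∧
    (∀ y ∈ U, y ∈ Ω ↔ φ y < 0) ∧ ∀ y ∈ U, fderiv ℝ φ y ≠ 0

/-- Hypothesis (H1): `f` is locally Hölder continuous in `Ω` of some exponent `β > 0`. -/
def LocallyHolder {N : ℕ} (Ω : Set (EucSp N)) (f : EucSp N → ℝ) : Prop :=
  ∃ β : NNReal, 0 < β ∧ ∀ K ⊆ Ω, IsCompact K → ∃ C : NNReal, HolderOnWith C β f K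

/-- The one-dimensional constant
`C(τ) = ∫_0^∞ (χ_{(0,1)}(t)|1-t|^τ + (1+t)^τ - 2) t^{-1-2α} dt`. -/
def Cint (α τ : ℝ) : ℝ :=
  ∫ t in Ioi (0 : ℝ),
    ((Ioo (0 : ℝ) 1).indicator (fun s => |1 - s| ^ τ) t + (1 + t) ^ τ - 2) / t ^ (1 + 2 * α)

/-- `τ₀` is the unique zero of `C(⬝)` in `(-1,0)`. -/
def IsTau0 (α τ₀ : ℝ) : Prop :=
  τ₀ ∈ Ioo (-1 : ℝ) 0 ∧ Cint α τ₀ = 0 ∧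
    ∀ τ ∈ Ioo (-1 : ℝ) 0, Cint α τ = 0 → τ = τ₀

/-- Classical solution of the large-solution problem
`(-Δ)^α u + |u|^{p-1}u = f` in `Ω`, `u = 0` in `Ω^c`, `u(x) → +∞` as `x → ∂Ω`. -/
def IsLargeSolution (N : ℕ) (α p : ℝ) (Ω : Set (EucSp N)) (f u : EucSp N → ℝ) : Prop :=
  MemL1w N α u ∧ ContinuousOn u Ω ∧ (∀ x ∈ (closure Ω)ᶜ, u x = 0) ∧
    (∀ x ∈ Ω, FracLapDefinedAt N α u x ∧
      fracLap N α u x + |u x| ^ (p - 1) * u x = f x) ∧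
    Tendsto u (bdryFilter Ω) atTop

/-- `0 < liminf g(x) d(x)^{-τ} ≤ limsup g(x) d(x)^{-τ} < +∞` as `x ∈ Ω`, `x → ∂Ω`. -/
def Asymp {N : ℕ} (Ω : Set (EucSp N)) (g : EucSp N → ℝ) (τ : ℝ) : Prop :=
  0 < liminf (fun x => ((g x * dΩ Ω x ^ (-τ) : ℝ) : EReal)) (bdryFilter Ω) ∧
    liminf (fun x => ((g x * dΩ Ω x ^ (-τ) : ℝ) : EReal)) (bdryFilter Ω) ≤
      limsup (fun x => ((g x * dΩ Ω x ^ (-τ) : ℝ) : EReal)) (bdryFilter Ω) ∧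
    limsup (fun x => ((g x * dΩ Ω x ^ (-τ) : ℝ) : EReal)) (bdryFilter Ω) < ⊤

/-- Hypothesis (H2). -/
def HypH2 {N : ℕ} (Ω : Set (EucSp N)) (f : EucSp N → ℝ) (α p : ℝ) : Prop :=
  limsup (fun x => ((max (f x) 0 * dΩ Ω x ^ (2 * α * p / (p - 1)) : ℝ) : EReal))
      (bdryFilter Ω) < ⊤ ∧
    Tendsto (fun x => max (-f x) 0 * dΩ Ω x ^ (2 * α * p / (p - 1))) (bdryFilter Ω) (𝓝 0)

/-- Hypothesis (H2*). -/
def HypH2star {N : ℕ} (Ω : Set (EucSp N)) (f : EucSp N → ℝ) (α : ℝ) : Prop :=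
  limsup (fun x => ((|f x| * dΩ Ω x ^ (2 * α) : ℝ) : EReal)) (bdryFilter Ω) < ⊤

/-- Classical sub-solution of `(-Δ)^α u + |u|^{p-1}u = f` in `Ω`. -/
def IsSubSol (N : ℕ) (α p : ℝ) (Ω : Set (EucSp N)) (f U : EucSp N → ℝ) : Prop :=
  ContinuousOn U Ω ∧ MemL1w N α U ∧
    ∀ x ∈ Ω, FracLapDefinedAt N α U x ∧
      fracLap N α U x + |U x| ^ (p - 1) * U x ≤ f x

/-- Classical super-solution of `(-Δ)^α u + |u|^{p-1}u = f` in `Ω`. -/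
def IsSuperSol (N : ℕ) (α p : ℝ) (Ω : Set (EucSp N)) (f U : EucSp N → ℝ) : Prop :=
  ContinuousOn U Ω ∧ MemL1w N α U ∧
    ∀ x ∈ Ω, FracLapDefinedAt N α U x ∧
      f x ≤ fracLap N α U x + |U x| ^ (p - 1) * U x

/-- Viscosity super-solution of `(-Δ)^α u + h(u) ≥ f` in `O`. -/
def ViscSuper (N : ℕ) (α : ℝ) (h : ℝ → ℝ) (f : EucSp N → ℝ) (O : Set (EucSp N))
    (u : EucSp N → ℝ) : Prop :=
  ∀ x₀ ∈ O, ∀ V : Set (EucSp N), IsOpen V → x₀ ∈ V → closure V ⊆ O →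
    ∀ φ : EucSp N → ℝ, ContDiffOn ℝ 2 φ (closure V) → φ x₀ = u x₀ →
      (∀ x ∈ V, φ x ≤ u x) →
      f x₀ ≤ fracLap N α (fun y => if y ∈ V then φ y else u y) x₀ + h (u x₀)

/-- Viscosity sub-solution of `(-Δ)^α u + h(u) ≤ f` in `O`. -/
def ViscSub (N : ℕ) (α : ℝ) (h : ℝ → ℝ) (f : EucSp N → ℝ) (O : Set (EucSp N))
    (u : EucSp N → ℝ) : Prop :=
  ∀ x₀ ∈ O, ∀ V : Set (EucSp N), IsOpen V → x₀ ∈ V → closure V ⊆ O →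
    ∀ φ : EucSp N → ℝ, ContDiffOn ℝ 2 φ (closure V) → φ x₀ = u x₀ →
      (∀ x ∈ V, u x ≤ φ x) →
      fracLap N α (fun y => if y ∈ V then φ y else u y) x₀ + h (u x₀) ≤ f x₀

/-- Prepending a first coordinate: `(z₁, z') ∈ ℝ × ℝ^n = ℝ^{n+1}`. -/
def consE {n : ℕ} (a : ℝ) (b : EucSp n) : EucSp (n + 1) :=
  (EuclideanSpace.equiv (Fin (n + 1)) ℝ).symm (Fin.cons a (fun i => b i))

end

/-!
Near `0` the derivative of the graph function satisfies `‖Dφ(y)‖ ≤ M‖y‖`, so `φ` is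
`Mρ`-Lipschitz on the ball of radius `ρ` and `|φ(z')| ≤ M‖z'‖²`. Let `z ∈ Ω` and
`D = z₁ - φ(z')`. A point `w` of the ball of radius `R = D(1 - M²‖z'‖²)` around `z` has vertical
offset `t` and horizontal offset `s` with `t² + s² < R²`; as `√(R² - s²) ≤ R - s²/(2R)` and the
slope of `φ` between `z'` and `w'` is at most `M(‖z'‖ + s)`, the point `w` still lies above the
graph, hence in `Ω`. So this ball misses `∂Ω`, and `d(z) ≥ R`.
-/

theorem ContDiffAt.exists_lipschitz_closedBall_of_fderiv_eq_zero {E F : Type*}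
    [NormedAddCommGroup E] [NormedSpace ℝ E] [NormedAddCommGroup F] [NormedSpace ℝ F]
    {f : E → F} {x : E} (hf : ContDiffAt ℝ 2 f x) (hf' : fderiv ℝ f x = 0) :
    ∃ M > 0, ∃ r > 0, ∀ ρ < r, ∀ a ∈ Metric.closedBall x ρ, ∀ b ∈ Metric.closedBall x ρ,
      ‖f b - f a‖ ≤ M * ρ * ‖b - a‖ := by
  obtain ⟨K, t, ht, hK⟩ := (hf.fderiv_right (m := 1) (by norm_num)).exists_lipschitzOnWith
  have hdiff : ∀ᶠ y in 𝓝 x, DifferentiableAt ℝ f y :=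
    (hf.eventually (by simp)).mono fun y hy => hy.differentiableAt (by norm_num)
  obtain ⟨r, hr, hball⟩ := Metric.mem_nhds_iff.1 (inter_mem ht hdiff)
  refine ⟨K + 1, by positivity, r, hr, fun ρ hρ a ha b hb => ?_⟩
  have hsub : Metric.closedBall x ρ ⊆ t ∩ {y | DifferentiableAt ℝ f y} :=
    (Metric.closedBall_subset_ball hρ).trans hball
  have hbound : ∀ y ∈ Metric.closedBall x ρ, ‖fderiv ℝ f y‖ ≤ (K + 1) * ρ := fun y hy => by
    have hy' : ‖y - x‖ ≤ ρ := by rwa [← dist_eq_norm, ← Metric.mem_closedBall]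
    calc ‖fderiv ℝ f y‖ = ‖fderiv ℝ f y - fderiv ℝ f x‖ := by rw [hf', sub_zero]
      _ ≤ K * ‖y - x‖ := by
        simpa only [dist_eq_norm] using hK.dist_le_mul y (hsub hy).1 x (mem_of_mem_nhds ht)
      _ ≤ (K + 1) * ρ := by gcongr; linarith
  exact (convex_closedBall x ρ).norm_image_sub_le_of_norm_fderiv_le
    (fun y hy => (hsub hy).2) hbound ha hb

theorem le_infDist_frontier_of_ball_subset {E : Type*} [MetricSpace E] {s : Set E} {x : E}
    {r : ℝ} (hs : (frontier s).Nonempty) (hball : Metric.ball x r ⊆ s) :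
    r ≤ Metric.infDist x (frontier s) :=
  (Metric.le_infDist hs).2 fun _ hy => not_lt.1 fun hxy =>
    hy.2 (interior_maximal hball Metric.isOpen_ball (Metric.mem_ball'.2 hxy))

theorem exists_consE_eq {n : ℕ} (w : EucSp (n + 1)) : ∃ a b, consE a b = w :=
  ⟨w 0, WithLp.toLp 2 fun i => w i.succ, by ext i; exact Fin.cases rfl (fun _ => rfl) i⟩

theorem dist_consE_sq {n : ℕ} (a c : ℝ) (b d : EucSp n) :
    dist (consE a b) (consE c d) ^ 2 = (a - c) ^ 2 + dist b d ^ 2 := by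
  rw [EuclideanSpace.dist_eq, EuclideanSpace.dist_eq, Real.sq_sqrt (by positivity),
    Real.sq_sqrt (by positivity), Fin.sum_univ_succ]
  simp [consE, Real.dist_eq]

theorem add_mul_lt_of_sq_add_sq_lt {D M ζ s t : ℝ} (hM : 0 ≤ M) (hD : 0 < D)
    (hMD : 4 * M * D ≤ 1) (hR : 0 < D * (1 - M ^ 2 * ζ ^ 2))
    (hts : t ^ 2 + s ^ 2 < (D * (1 - M ^ 2 * ζ ^ 2)) ^ 2) :
    t + M * (ζ + s) * s < D := by
  set R := D * (1 - M ^ 2 * ζ ^ 2) with hRdef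
  set Q := D - M * (ζ + s) * s
  have hRD : R ≤ D := mul_le_of_le_one_right hD.le (by nlinarith [sq_nonneg (M * ζ)])
  have hMR : 4 * M * R ≤ 1 := le_trans (by gcongr) hMD
  -- `√(R² - s²) ≤ R - s²/(2R)`, and the latter is at most `Q`
  have hkey : 2 * R ^ 2 - s ^ 2 ≤ Q * (2 * R) := by
    have hamgm : 4 * (M * R * ζ) * s ≤ s ^ 2 + 4 * (M * R * ζ) ^ 2 := by
      nlinarith [sq_nonneg (s - 2 * (M * R * ζ))]
    have hζ : (M * R * ζ) ^ 2 ≤ M ^ 2 * R * D * ζ ^ 2 := by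
      have := mul_le_mul_of_nonneg_left hRD (by positivity : 0 ≤ M ^ 2 * ζ ^ 2 * R)
      nlinarith
    have hs : 4 * M * R * s ^ 2 ≤ s ^ 2 := by nlinarith [sq_nonneg s]
    have hR2 : R ^ 2 = R * D - M ^ 2 * R * D * ζ ^ 2 := by rw [hRdef]; ring
    nlinarith
  have hsR : 0 < 2 * R ^ 2 - s ^ 2 := by nlinarith [sq_nonneg t]
  have hQ : 0 < Q := by nlinarith
  have hsq : 4 * R ^ 2 * t ^ 2 < (Q * (2 * R)) ^ 2 := by
    nlinarith [mul_self_le_mul_self hsR.le hkey, sq_nonneg (s ^ 2), mul_pos hR hR]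
  have ht : t ^ 2 < Q ^ 2 := by nlinarith [mul_pos hR hR]
  linarith [abs_lt_of_sq_lt_sq ht hQ.le, le_abs_self t]

theorem ball_subset_of_graph {n : ℕ} {Ω : Set (EucSp (n + 1))} {φ : EucSp n → ℝ}
    {ρ M z₁ : ℝ} {z' : EucSp n}
    (hΩ : ∀ (w₁ : ℝ) (w' : EucSp n), |w₁| < ρ → ‖w'‖ < ρ → φ w' < w₁ → consE w₁ w' ∈ Ω)
    (hφ : ∀ ρ' < ρ, ∀ a ∈ Metric.closedBall 0 ρ', ∀ b ∈ Metric.closedBall 0 ρ',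
      |φ b - φ a| ≤ M * ρ' * ‖b - a‖)
    (hM : 0 ≤ M) (hD : 0 < z₁ - φ z') (hMD : 4 * M * (z₁ - φ z') ≤ 1)
    (hz₁ : |z₁| + (z₁ - φ z') < ρ) (hz' : ‖z'‖ + (z₁ - φ z') < ρ) :
    Metric.ball (consE z₁ z') ((z₁ - φ z') * (1 - M ^ 2 * ‖z'‖ ^ 2)) ⊆ Ω := by
  intro w hw
  obtain ⟨w₁, w', rfl⟩ := exists_consE_eq w
  set D := z₁ - φ z'
  set R := D * (1 - M ^ 2 * ‖z'‖ ^ 2)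
  set s := dist w' z'
  have hR : 0 < R := dist_nonneg.trans_lt hw
  have hRD : R ≤ D := mul_le_of_le_one_right hD.le (by nlinarith [sq_nonneg (M * ‖z'‖)])
  have hts : (z₁ - w₁) ^ 2 + s ^ 2 < R ^ 2 := by
    rw [← neg_sub, neg_sq, ← dist_consE_sq]
    exact pow_lt_pow_left₀ hw dist_nonneg two_ne_zero
  have hw₁ : |w₁| < ρ := by
    have := abs_lt_of_sq_lt_sq (by nlinarith [sq_nonneg s] : (z₁ - w₁) ^ 2 < R ^ 2) hR.le
    linarith [abs_sub_abs_le_abs_sub w₁ z₁, abs_sub_comm w₁ z₁]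
  have hs : ‖z'‖ + s < ρ := by
    have := abs_lt_of_sq_lt_sq (by nlinarith [sq_nonneg (z₁ - w₁)] : s ^ 2 < R ^ 2) hR.le
    linarith [le_abs_self s]
  have hw' : ‖w'‖ ≤ ‖z'‖ + s := by
    simpa only [s, dist_eq_norm, add_comm] using norm_le_norm_add_norm_sub' w' z'
  have hslope : φ w' - φ z' ≤ M * (‖z'‖ + s) * s := by
    have := hφ (‖z'‖ + s) hs z' (by simp [s, dist_nonneg]) w'
      (by simpa using hw')
    exact (le_abs_self _).trans (by simpa only [s, dist_eq_norm] using this)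
  have := add_mul_lt_of_sq_add_sq_lt hM hD hMD hR hts
  exact hΩ w₁ w' hw₁ (hw'.trans_lt hs) (by linarith)

theorem distance_graph_lower_bound_general
    (n : ℕ)
    (Ω : Set (EucSp (n + 1)))
    (η₀ : ℝ) (hη₀ : 0 < η₀) (φ : EucSp n → ℝ)
    (hφ0 : φ 0 = 0) (hφ'0 : fderiv ℝ φ 0 = 0)
    (hφC2 : ContDiffOn ℝ 2 φ (Metric.ball 0 η₀))
    (hgraph : ∀ (z₁ : ℝ) (z' : EucSp n), |z₁| < η₀ → ‖z'‖ < η₀ →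
      (consE z₁ z' ∈ Ω ↔ φ z' < z₁))
    (hbdry : ∀ z' : EucSp n, ‖z'‖ < η₀ → consE (φ z') z' ∈ frontier Ω) :
    ∃ η > 0, ∃ C > 0, ∀ (z₁ : ℝ) (z' : EucSp n), |z₁| < η → ‖z'‖ < η →
      consE z₁ z' ∈ Ω →
      (z₁ - φ z') * (1 - C * ‖z'‖ ^ 2) ≤
        Metric.infDist (consE z₁ z') (frontier Ω) := by
  obtain ⟨M, hM, r, hr, hφ⟩ :=
    (hφC2.contDiffAt (Metric.isOpen_ball.mem_nhds (Metric.mem_ball_self hη₀))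
      ).exists_lipschitz_closedBall_of_fderiv_eq_zero hφ'0
  set ρ := min r η₀
  obtain ⟨η, hη, hηρ, hMη⟩ : ∃ η > 0, 8 * η ≤ ρ ∧ 8 * M * η ≤ 1 := by
    refine ⟨min ρ (1 / M) / 8, by positivity, by linarith [min_le_left ρ (1 / M)], ?_⟩
    have := mul_le_mul_of_nonneg_left (min_le_right ρ (1 / M)) hM.le
    rw [mul_one_div_cancel hM.ne'] at this
    linarith
  refine ⟨η, hη, M ^ 2, by positivity, fun z₁ z' hz₁ hz' hz => ?_⟩
  have hρr : ρ ≤ r := min_le_left r η₀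
  have hρη₀ : ρ ≤ η₀ := min_le_right r η₀
  have hD : 0 < z₁ - φ z' :=
    sub_pos.2 ((hgraph z₁ z' (by linarith) (by linarith)).1 hz)
  have hφz' : |φ z'| ≤ M * ‖z'‖ * ‖z'‖ := by
    simpa [hφ0] using hφ ‖z'‖ (by linarith) 0 (by simp) z' (by simp)
  have hDη : z₁ - φ z' ≤ 2 * η := by
    have hMz' : M * ‖z'‖ ≤ 1 / 8 := by nlinarith [mul_le_mul_of_nonneg_left hz'.le hM.le]
    have : M * ‖z'‖ * ‖z'‖ ≤ η := by nlinarith [norm_nonneg z']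
    linarith [neg_abs_le (φ z'), le_abs_self z₁]
  refine le_infDist_frontier_of_ball_subset ⟨_, hbdry 0 (by simpa using hη₀)⟩
    (ball_subset_of_graph (ρ := ρ) ?_ ?_ hM.le hD (by nlinarith) (by linarith) (by linarith))
  · exact fun w₁ w' hw₁ hw' hw => (hgraph w₁ w' (by linarith) (by linarith)).2 hw
  · exact fun ρ' hρ' a ha b hb => by
      simpa only [Real.norm_eq_abs] using hφ ρ' (by linarith) a ha b hb

/-- Lemma 3.3 (geometric distance estimate): near a boundary point written as a
`C²` graph `z₁ = φ(z')`, one has `d(z) ≥ (z₁ - φ(z'))(1 - C|z'|²)`. -/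
theorem distance_graph_lower_bound
    (n : ℕ) (hn : 1 ≤ n)
    (Ω : Set (EucSp (n + 1))) (hΩopen : IsOpen Ω)
    (η₀ : ℝ) (hη₀ : 0 < η₀) (φ : EucSp n → ℝ)
    (hφ0 : φ 0 = 0) (hφ'0 : fderiv ℝ φ 0 = 0)
    (hφC2 : ContDiffOn ℝ 2 φ (Metric.ball 0 η₀))
    (hgraph : ∀ (z₁ : ℝ) (z' : EucSp n), |z₁| < η₀ → ‖z'‖ < η₀ →
      (consE z₁ z' ∈ Ω ↔ φ z' < z₁))
    (hbdry : ∀ z' : EucSp n, ‖z'‖ < η₀ → consE (φ z') z' ∈ frontier Ω) :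
    ∃ η > 0, ∃ C > 0, ∀ (z₁ : ℝ) (z' : EucSp n), |z₁| < η → ‖z'‖ < η →
      consE z₁ z' ∈ Ω →
      (z₁ - φ z') * (1 - C * ‖z'‖ ^ 2) ≤
        Metric.infDist (consE z₁ z') (frontier Ω) :=
  distance_graph_lower_bound_general n Ω η₀ hη₀ φ hφ0 hφ'0 hφC2 hgraph hbdry
end

section
/- Let α ∈ (0,1), let O ⊂ ℝ^N be an open, bounded set, let f : O → ℝ be continuous and let h : ℝ → ℝ be increasing. Let u, v : ℝ^N → ℝ be continuous on the closure of O, with (−Δ)^α u(x) and (−Δ)^α v(x) well defined for all x ∈ O, satisfying (−Δ)^α u(x) + h(u(x)) ≥ f(x) and (−Δ)^α v(x) + h(v(x)) ≤ f(x) for all x ∈ O, and v(x) ≤ u(x) for all x ∈ O^c. Then u(x) ≥ v(x) for all x ∈ O. -/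
open MeasureTheory Filter Topology Set
open scoped Classical

/-! Suppose `v - u` is positive somewhere. Being continuous on the compact set `closure O` and
nonpositive off `O`, it attains a positive global maximum at some `x₀ ∈ O`. There every second
difference of `v - u` is nonpositive, and it is strictly negative as soon as `x₀ ± y` leave the
bounded set `O`, which happens on a set of positive measure when `N ≥ 1`. Hence
`(-Δ)^α v (x₀) > (-Δ)^α u (x₀)`, while `h (v x₀) ≥ h (u x₀)` by monotonicity, contradicting the
two differential inequalities at `x₀`. -/

open Metric Function

theorem exists_pos_isMaxOn_univ_of_nonpos_compl {X : Type*} [TopologicalSpace X] {O : Set X}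
    {g : X → ℝ} (hO : IsCompact (closure O)) (hg : ContinuousOn g (closure O))
    (hout : ∀ z ∉ O, g z ≤ 0) {x₁ : X} (hx₁ : 0 < g x₁) :
    ∃ x₀ ∈ O, 0 < g x₀ ∧ IsMaxOn g univ x₀ := by
  have hx₁O : x₁ ∈ O := by
    by_contra h
    linarith [hout x₁ h]
  obtain ⟨x₀, hx₀, hmax⟩ := hO.exists_isMaxOn ⟨x₁, subset_closure hx₁O⟩ hg
  have hpos : 0 < g x₀ := hx₁.trans_le (hmax (subset_closure hx₁O))
  refine ⟨x₀, ?_, hpos, fun z _ => ?_⟩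
  · by_contra h
    linarith [hout x₀ h]
  · by_cases hz : z ∈ closure O
    · exact hmax hz
    · exact (hout z fun h => hz (subset_closure h)).trans hpos.le

theorem measure_compl_closedBall_pos {E : Type*} [NormedAddCommGroup E] [NormedSpace ℝ E]
    [Nontrivial E] [MeasurableSpace E] (μ : Measure E) [μ.IsOpenPosMeasure] (x : E) (r : ℝ) :
    0 < μ (closedBall x r)ᶜ := by
  obtain ⟨w, hw⟩ := NormedSpace.exists_lt_norm ℝ E r
  refine isClosed_closedBall.isOpen_compl.measure_pos μ ⟨x + w, ?_⟩
  simpa [mem_closedBall, dist_eq_norm] using hw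

section FracLap

variable {N : ℕ} {α : ℝ} {u v g : EucSp N → ℝ} {x : EucSp N}

theorem fracKernel_sub (u v : EucSp N → ℝ) (x : EucSp N) :
    fracKernel N α (v - u) x = fracKernel N α v x - fracKernel N α u x := by
  ext y
  simp only [fracKernel, Pi.sub_apply]
  ring

theorem FracLapDefinedAt.sub (hv : FracLapDefinedAt N α v x) (hu : FracLapDefinedAt N α u x) :
    FracLapDefinedAt N α (v - u) x := by
  unfold FracLapDefinedAt
  rw [fracKernel_sub]
  exact Integrable.sub hv hu

theorem fracLap_sub (hv : FracLapDefinedAt N α v x) (hu : FracLapDefinedAt N α u x) :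
    fracLap N α (v - u) x = fracLap N α v x - fracLap N α u x := by
  simp only [fracLap, fracKernel_sub, Pi.sub_apply]
  rw [integral_sub hv hu]
  ring

theorem fracKernel_nonpos_of_isMaxOn (hmax : IsMaxOn g univ x) (y : EucSp N) :
    fracKernel N α g x y ≤ 0 := by
  have hmax' := isMaxOn_univ_iff.mp hmax
  exact div_nonpos_of_nonpos_of_nonneg (by linarith [hmax' (x + y), hmax' (x - y)])
    (by positivity)

theorem fracLap_pos_of_isMaxOn (hg : FracLapDefinedAt N α g x) (hmax : IsMaxOn g univ x)
    (hsupp : 0 < volume (support (fracKernel N α g x))) : 0 < fracLap N α g x := by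
  have hint : 0 < ∫ y, -fracKernel N α g x y := by
    refine (integral_pos_iff_support_of_nonneg
      (fun y => neg_nonneg.mpr (fracKernel_nonpos_of_isMaxOn hmax y)) hg.neg).mpr ?_
    rwa [support_fun_neg]
  rw [integral_neg] at hint
  unfold fracLap
  linarith

theorem compl_closedBall_subset_support_fracKernel {O : Set (EucSp N)} {r : ℝ}
    (hOr : O ⊆ closedBall x r) (hout : ∀ z ∉ O, g z ≤ 0) (hpos : 0 < g x) (hr : 0 < r) :
    (closedBall 0 r)ᶜ ⊆ support (fracKernel N α g x) := by
  intro y hy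
  have hry : r < ‖y‖ := by simpa using hy
  have hfar : ∀ z, r < dist z x → g z ≤ 0 := fun z hz =>
    hout z fun hzO => (mem_closedBall.mp (hOr hzO)).not_gt hz
  have hplus := hfar (x + y) (by simpa [dist_eq_norm] using hry)
  have hminus := hfar (x - y) (by simpa [dist_eq_norm] using hry)
  refine (div_neg_of_neg_of_pos (by linarith) ?_).ne
  exact Real.rpow_pos_of_pos (hr.trans hry) _

theorem fracLap_pos_of_isMaxOn_of_nonpos_compl (hN : 1 ≤ N) {O : Set (EucSp N)}
    (hO : Bornology.IsBounded O) (hout : ∀ z ∉ O, g z ≤ 0) (hg : FracLapDefinedAt N α g x)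
    (hmax : IsMaxOn g univ x) (hpos : 0 < g x) : 0 < fracLap N α g x := by
  obtain ⟨r, hr, hOr⟩ := hO.subset_closedBall_lt 0 x
  have : Nonempty (Fin N) := ⟨⟨0, hN⟩⟩
  exact fracLap_pos_of_isMaxOn hg hmax ((measure_compl_closedBall_pos volume 0 r).trans_le
    (measure_mono (compl_closedBall_subset_support_fracKernel hOr hout hpos hr)))

end FracLap

theorem comparison_principle_general
    (N : ℕ) (hN : 1 ≤ N) (α : ℝ)
    (O : Set (EucSp N)) (hObdd : Bornology.IsBounded O)
    (f : EucSp N → ℝ)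
    (h : ℝ → ℝ) (hmono : Monotone h)
    (u v : EucSp N → ℝ)
    (hu : ContinuousOn u (closure O)) (hv : ContinuousOn v (closure O))
    (hsuper : ∀ x ∈ O, FracLapDefinedAt N α u x ∧ f x ≤ fracLap N α u x + h (u x))
    (hsub : ∀ x ∈ O, FracLapDefinedAt N α v x ∧ fracLap N α v x + h (v x) ≤ f x)
    (hout : ∀ x ∈ Oᶜ, v x ≤ u x) :
    ∀ x ∈ O, v x ≤ u x := by
  by_contra! hcon
  obtain ⟨x₁, -, hx₁⟩ := hcon
  have hdiff_out : ∀ z ∉ O, (v - u) z ≤ 0 := fun z hz => sub_nonpos.mpr (hout z hz)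
  obtain ⟨x₀, hx₀O, hpos, hmax⟩ := exists_pos_isMaxOn_univ_of_nonpos_compl
    hObdd.isCompact_closure (hv.sub hu) hdiff_out (sub_pos.mpr hx₁)
  obtain ⟨hu₀, hsuper₀⟩ := hsuper x₀ hx₀O
  obtain ⟨hv₀, hsub₀⟩ := hsub x₀ hx₀O
  have hlap := fracLap_pos_of_isMaxOn_of_nonpos_compl hN hObdd hdiff_out (hv₀.sub hu₀) hmax hpos
  rw [fracLap_sub hv₀ hu₀] at hlap
  have hh : h (u x₀) ≤ h (v x₀) := hmono (sub_pos.mp hpos).le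
  linarith

/-- Theorem 2.4 (Comparison principle). -/
theorem comparison_principle
    (N : ℕ) (hN : 1 ≤ N) (α : ℝ) (hα : α ∈ Ioo (0 : ℝ) 1)
    (O : Set (EucSp N)) (hOopen : IsOpen O) (hObdd : Bornology.IsBounded O)
    (f : EucSp N → ℝ) (hf : ContinuousOn f O)
    (h : ℝ → ℝ) (hmono : Monotone h)
    (u v : EucSp N → ℝ)
    (hu : ContinuousOn u (closure O)) (hv : ContinuousOn v (closure O))
    (hsuper : ∀ x ∈ O, FracLapDefinedAt N α u x ∧ f x ≤ fracLap N α u x + h (u x))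
    (hsub : ∀ x ∈ O, FracLapDefinedAt N α v x ∧ fracLap N α v x + h (v x) ≤ f x)
    (hout : ∀ x ∈ Oᶜ, v x ≤ u x) :
    ∀ x ∈ O, v x ≤ u x :=
  comparison_principle_general N hN α O hObdd f h hmono u v hu hv hsuper hsub hout
end

section
/- Let N ≥ 2, α ∈ (0,1), p > 1, let Ω ⊂ ℝ^N be an open, bounded, connected set with C² boundary, and let f : Ω → ℝ be nonnegative. Let u and v be two positive classical solutions of (−Δ)^α u + |u|^{p−1}u = f in Ω, u = 0 in Ω^c, u(x) → +∞ as x → ∂Ω. If for some k > 1 the set A_k = {x ∈ Ω : u(x) − k v(x) > 0} is nonempty, then the closure of A_k meets ∂Ω, i.e. ∂A_k ∩ ∂Ω ≠ ∅. -/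
open MeasureTheory Filter Topology Set
open scoped Classical

/-!
If `A_k` stays away from `∂Ω`, its closure is a compact subset of `Ω`, so `w = u - k v` attains a
positive maximum at some `x₀ ∈ Ω`. Since `w ≤ 0` on `Ω \ A_k` and `w = 0` outside `Ω̄`, this is a
maximum of `w` on all of `ℝ^N \ ∂Ω`; the solutions are unconstrained on `∂Ω` itself, but a `C²`
boundary is Lebesgue-null (by the mean value theorem it meets each line in a coordinate direction
along which the defining function has nonzero derivative at most once). Hence the second
differences of `w` at `x₀` are a.e. nonpositive and `(-Δ)^α w(x₀) ≥ 0`. Subtracting the equations,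
however, `(-Δ)^α w(x₀) = (1 - k) f(x₀) - (u(x₀)^p - k v(x₀)^p) < 0`, because `k > 1`, `f ≥ 0`
and `u(x₀) > k v(x₀) > 0`.
-/

section Coordinates

variable {ι : Type*} [Fintype ι] [DecidableEq ι]

/-- The hypothesis says that `S` meets every line parallel to the `i`-th axis at most once. -/
theorem volume_pi_eq_zero_of_injOn_restrict (i : ι) {S : Set (ι → ℝ)} (hS : MeasurableSet S)
    (h : S.InjOn fun a (j : {j // j ≠ i}) => a j) : volume S = 0 := by
  set e := MeasurableEquiv.piEquivPiSubtypeProd (fun _ : ι => ℝ) (· ≠ i)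
  have he := volume_preserving_piEquivPiSubtypeProd (fun _ : ι => ℝ) (· ≠ i)
  have : Nonempty {j // ¬j ≠ i} := ⟨⟨i, not_not.2 rfl⟩⟩
  rw [← he.symm.measure_preimage hS.nullMeasurableSet, Measure.volume_eq_prod,
    Measure.measure_prod_null (e.symm.measurable hS)]
  refine .of_forall fun x => Set.Subsingleton.measure_zero ?_ _
  intro y₁ hy₁ y₂ hy₂
  have h₁₂ := h hy₁ hy₂ (funext fun j => by simp [e, j.2])
  simpa using congrArg Prod.snd (e.symm.injective h₁₂)

theorem EuclideanSpace.volume_eq_zero_of_injOn_restrict (i : ι) {S : Set (EuclideanSpace ℝ ι)}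
    (hS : MeasurableSet S) (h : S.InjOn fun a (j : {j // j ≠ i}) => a j) : volume S = 0 := by
  rw [← (PiLp.volume_preserving_toLp ι).measure_preimage hS.nullMeasurableSet]
  exact volume_pi_eq_zero_of_injOn_restrict i (WithLp.measurable_toLp 2 _ hS)
    fun a ha b hb hab => WithLp.toLp_injective 2 (h ha hb hab)

theorem Convex.injOn_restrict_of_fderiv_single_ne_zero {B : Set (EuclideanSpace ℝ ι)}
    (hB : Convex ℝ B) {φ : EuclideanSpace ℝ ι → ℝ} (hφ : ∀ y ∈ B, DifferentiableAt ℝ φ y)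
    (i : ι) (hi : ∀ y ∈ B, fderiv ℝ φ y (EuclideanSpace.single i 1) ≠ 0) :
    {y | y ∈ B ∧ φ y = 0}.InjOn fun a (j : {j // j ≠ i}) => a j := by
  rintro a ⟨haB, ha⟩ b ⟨hbB, hb⟩ hab
  have hoff : ∀ j ≠ i, a j = b j := fun j hj => congrFun hab ⟨j, hj⟩
  have hba : b - a = (b i - a i) • EuclideanSpace.single i 1 := by
    ext j
    by_cases hj : j = i
    · subst hj; simp
    · simp [hj, hoff j hj]
  obtain ⟨z, hz, hmvt⟩ :=
    domain_mvt (fun y hy => (hφ y hy).hasFDerivAt.hasFDerivWithinAt) hB haB hbB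
  rw [ha, hb, hba, map_smul, smul_eq_mul, sub_self, eq_comm, mul_eq_zero, sub_eq_zero] at hmvt
  have hai : a i = b i := (hmvt.resolve_right (hi z (hB.segment_subset haB hbB hz))).symm
  ext j
  by_cases hj : j = i
  · subst hj; exact hai
  · exact hoff j hj

end Coordinates

theorem apply_eq_zero_of_mem_frontier {X : Type*} [TopologicalSpace X] {Ω U : Set X}
    {φ : X → ℝ} (hΩ : IsOpen Ω) (hU : IsOpen U) (hφ : ContinuousOn φ U)
    (hiff : ∀ y ∈ U, y ∈ Ω ↔ φ y < 0) {y : X} (hy : y ∈ frontier Ω) (hyU : y ∈ U) :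
    φ y = 0 := by
  have hyΩ : y ∉ Ω := fun h => hy.2 (hΩ.interior_eq.symm ▸ h)
  have : (𝓝[Ω] y).NeBot := mem_closure_iff_nhdsWithin_neBot.1 (frontier_subset_closure hy)
  have hneg : ∀ᶠ z in 𝓝[Ω] y, φ z ≤ 0 := by
    filter_upwards [self_mem_nhdsWithin, nhdsWithin_le_nhds (hU.mem_nhds hyU)] with z hz hzU
    exact ((hiff z hzU).1 hz).le
  have hle : φ y ≤ 0 := le_of_tendsto
    ((hφ.continuousAt (hU.mem_nhds hyU)).tendsto.mono_left nhdsWithin_le_nhds) hneg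
  exact le_antisymm hle (not_lt.1 fun h => hyΩ ((hiff y hyU).2 h))

theorem HasC2Boundary.volume_frontier_eq_zero {N : ℕ} {Ω : Set (EucSp N)} (hΩ : IsOpen Ω)
    (hC2 : HasC2Boundary Ω) : volume (frontier Ω) = 0 := by
  refine measure_null_of_locally_null _ fun x hx => ?_
  obtain ⟨U, φ, hU, hxU, hφ, hiff, hgrad⟩ := hC2 x hx
  obtain ⟨i, hi⟩ : ∃ i, fderiv ℝ φ x (EuclideanSpace.single i 1) ≠ 0 := by
    by_contra! h
    refine hgrad x hxU (ContinuousLinearMap.coe_injective ?_)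
    exact (EuclideanSpace.basisFun (Fin N) ℝ).toBasis.ext fun j => by simpa using h j
  have hpartial : ContinuousAt (fun y => fderiv ℝ φ y (EuclideanSpace.single i 1)) x :=
    ((hφ.continuousOn_fderiv_of_isOpen hU (by norm_num)).clm_apply continuousOn_const)
      |>.continuousAt (hU.mem_nhds hxU)
  obtain ⟨r, hr, hball⟩ := Metric.eventually_nhds_iff_ball.1
    ((hpartial.eventually_ne hi).and (hU.eventually_mem hxU))
  refine ⟨frontier Ω ∩ Metric.ball x r, inter_mem_nhdsWithin _ (Metric.ball_mem_nhds x hr), ?_⟩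
  refine EuclideanSpace.volume_eq_zero_of_injOn_restrict i
    (isClosed_frontier.measurableSet.inter measurableSet_ball) ?_
  refine ((convex_ball x r).injOn_restrict_of_fderiv_single_ne_zero (φ := φ)
    (fun y hy => (hφ.differentiableOn (by norm_num)).differentiableAt
      (hU.mem_nhds (hball y hy).2)) i fun y hy => (hball y hy).1).mono ?_
  rintro y ⟨hyF, hyB⟩
  exact ⟨hyB, apply_eq_zero_of_mem_frontier hΩ hU hφ.continuousOn hiff hyF (hball y hyB).2⟩

theorem closure_subset_of_disjoint_frontier {X : Type*} [TopologicalSpace X] {A Ω : Set X}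
    (hΩ : IsOpen Ω) (hA : A ⊆ Ω) (h : Disjoint (frontier A) (frontier Ω)) : closure A ⊆ Ω := by
  intro y hy
  by_contra hyΩ
  have hyA : y ∈ frontier A := ⟨hy, fun h => hyΩ (hA (interior_subset h))⟩
  exact h.notMem_of_mem_left hyA ⟨closure_mono hA hy, hΩ.interior_eq.symm ▸ hyΩ⟩

theorem exists_pos_isMax_off_frontier {X : Type*} [PseudoMetricSpace X] [ProperSpace X]
    {Ω : Set X} {w : X → ℝ} (hΩ : IsOpen Ω) (hbdd : Bornology.IsBounded Ω)
    (hw : ContinuousOn w Ω) (hw0 : ∀ x ∉ closure Ω, w x ≤ 0)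
    (hA : {x | x ∈ Ω ∧ 0 < w x}.Nonempty)
    (hdisj : Disjoint (frontier {x | x ∈ Ω ∧ 0 < w x}) (frontier Ω)) :
    ∃ x₀ ∈ Ω, 0 < w x₀ ∧ ∀ x ∉ frontier Ω, w x ≤ w x₀ := by
  set A := {x | x ∈ Ω ∧ 0 < w x}
  have hAΩ : A ⊆ Ω := fun x hx => hx.1
  have hclA := closure_subset_of_disjoint_frontier hΩ hAΩ hdisj
  obtain ⟨x₀, hx₀, hmax⟩ := (hbdd.subset hAΩ).isCompact_closure.exists_isMaxOn hA.closure
    (hw.mono hclA)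
  obtain ⟨z, hz⟩ := hA
  have hpos : 0 < w x₀ := hz.2.trans_le (hmax (subset_closure hz))
  refine ⟨x₀, hclA hx₀, hpos, fun x hx => ?_⟩
  by_cases hxA : x ∈ A
  · exact hmax (subset_closure hxA)
  by_cases hxΩ : x ∈ Ω
  · exact (not_lt.1 fun h => hxA ⟨hxΩ, h⟩).trans hpos.le
  · have hxcl : x ∉ closure Ω := by
      rw [closure_eq_interior_union_frontier, hΩ.interior_eq]
      exact fun h => h.elim hxΩ hx
    exact (hw0 x hxcl).trans hpos.le

theorem fracLap_nonneg_of_ae_le {N : ℕ} {α : ℝ} {w : EucSp N → ℝ} {x₀ : EucSp N}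
    (h : ∀ᵐ z, w z ≤ w x₀) : 0 ≤ fracLap N α w x₀ := by
  have hplus : ∀ᵐ y : EucSp N, w (x₀ + y) ≤ w x₀ :=
    (measurePreserving_add_left volume x₀).quasiMeasurePreserving.ae h
  have hminus : ∀ᵐ y : EucSp N, w (x₀ - y) ≤ w x₀ :=
    (volume.measurePreserving_sub_left x₀).quasiMeasurePreserving.ae h
  have hker : ∀ᵐ y, fracKernel N α w x₀ y ≤ 0 := by
    filter_upwards [hplus, hminus] with y h₁ h₂
    exact div_nonpos_of_nonpos_of_nonneg (by linarith) (by positivity)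
  have := integral_nonpos_of_ae hker
  unfold fracLap
  linarith

theorem fracLap_sub_const_mul {N : ℕ} {α : ℝ} {u v : EucSp N → ℝ} {x : EucSp N}
    (hu : FracLapDefinedAt N α u x) (hv : FracLapDefinedAt N α v x) (k : ℝ) :
    fracLap N α (fun y => u y - k * v y) x = fracLap N α u x - k * fracLap N α v x := by
  have hker : fracKernel N α (fun y => u y - k * v y) x =
      fun y => fracKernel N α u x y - k * fracKernel N α v x y := by
    funext y
    simp only [fracKernel]
    ring
  simp only [fracLap, hker]
  rw [integral_sub hu (hv.const_mul k), integral_const_mul]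
  ring

theorem const_mul_abs_rpow_mul_self_lt {a b k q : ℝ} (hb : 0 < b) (hk : 1 ≤ k) (hq : 0 ≤ q)
    (hab : k * b < a) : k * (|b| ^ q * b) < |a| ^ q * a := by
  have hkb : 0 < k * b := by positivity
  rw [abs_of_pos hb, abs_of_pos (hkb.trans hab)]
  calc k * (b ^ q * b) = 1 * (b ^ q * (k * b)) := by ring
    _ ≤ k ^ q * (b ^ q * (k * b)) :=
        mul_le_mul_of_nonneg_right (Real.one_le_rpow hk hq) (by positivity)
    _ = (k * b) ^ q * (k * b) := by rw [Real.mul_rpow (by linarith) hb.le]; ring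
    _ < a ^ q * a := mul_lt_mul_of_le_of_lt_of_nonneg_of_pos
        (Real.rpow_le_rpow hkb.le hab.le hq) hab hkb.le (Real.rpow_pos_of_pos (hkb.trans hab) q)

theorem Ak_boundary_touches_general
    (N : ℕ) (α p : ℝ) (hp : 1 < p)
    (Ω : Set (EucSp N)) (hΩopen : IsOpen Ω) (hΩbdd : Bornology.IsBounded Ω)
    (hΩC2 : HasC2Boundary Ω)
    (f : EucSp N → ℝ) (hf : ∀ x ∈ Ω, 0 ≤ f x)
    (u v : EucSp N → ℝ)
    (hu : IsLargeSolution N α p Ω f u) (hv : IsLargeSolution N α p Ω f v)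
    (hvpos : ∀ x ∈ Ω, 0 < v x)
    (k : ℝ) (hk : 1 < k)
    (hA : ({x | x ∈ Ω ∧ 0 < u x - k * v x} : Set (EucSp N)).Nonempty) :
    (frontier {x | x ∈ Ω ∧ 0 < u x - k * v x} ∩ frontier Ω).Nonempty := by
  by_contra hdisj
  rw [not_nonempty_iff_eq_empty, ← disjoint_iff_inter_eq_empty] at hdisj
  obtain ⟨-, huc, hu0, hueq, -⟩ := hu
  obtain ⟨-, hvc, hv0, hveq, -⟩ := hv
  obtain ⟨x₀, hx₀, hw₀, hmax⟩ := exists_pos_isMax_off_frontier (w := fun x => u x - k * v x)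
    hΩopen hΩbdd (huc.sub (continuousOn_const.mul hvc)) (fun x hx => by simp [hu0 x hx, hv0 x hx])
    hA hdisj
  have hlap : 0 ≤ fracLap N α (fun x => u x - k * v x) x₀ := fracLap_nonneg_of_ae_le <|
    (measure_eq_zero_iff_ae_notMem.1 (hΩC2.volume_frontier_eq_zero hΩopen)).mono hmax
  obtain ⟨hu', hux₀⟩ := hueq x₀ hx₀
  obtain ⟨hv', hvx₀⟩ := hveq x₀ hx₀
  rw [fracLap_sub_const_mul hu' hv'] at hlap
  have hpow := const_mul_abs_rpow_mul_self_lt (hvpos x₀ hx₀) hk.le (sub_nonneg.2 hp.le)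
    (sub_pos.1 hw₀)
  nlinarith [hf x₀ hx₀]

/-- Lemma 5.1: if `A_k = {u > k v}` is nonempty then its boundary meets `∂Ω`. -/
theorem Ak_boundary_touches
    (N : ℕ) (hN : 2 ≤ N) (α p : ℝ) (hα : α ∈ Ioo (0 : ℝ) 1) (hp : 1 < p)
    (Ω : Set (EucSp N)) (hΩopen : IsOpen Ω) (hΩbdd : Bornology.IsBounded Ω)
    (hΩconn : IsConnected Ω) (hΩC2 : HasC2Boundary Ω)
    (f : EucSp N → ℝ) (hf : ∀ x ∈ Ω, 0 ≤ f x)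
    (u v : EucSp N → ℝ)
    (hu : IsLargeSolution N α p Ω f u) (hv : IsLargeSolution N α p Ω f v)
    (hupos : ∀ x ∈ Ω, 0 < u x) (hvpos : ∀ x ∈ Ω, 0 < v x)
    (k : ℝ) (hk : 1 < k)
    (hA : ({x | x ∈ Ω ∧ 0 < u x - k * v x} : Set (EucSp N)).Nonempty) :
    (frontier {x | x ∈ Ω ∧ 0 < u x - k * v x} ∩ frontier Ω).Nonempty :=
  Ak_boundary_touches_general N α p hp Ω hΩopen hΩbdd hΩC2 f hf u v hu hv hvpos k hk hA
end
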